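/- arXiv:2512.22042 — 7 statements merged into one kernel-verified Lean document; each statement's English description precedes it below -/
import Mathlib

section
/- In a Priestley space, if F and G are closed subsets such that the upset of F and the downset of G are disjoint, then there exists a clopen upset U with F ⊆ U and G disjoint from U. -/
/-! Since no point of `F` lies below a point of `G`, the separation axiom separates each
`x ∈ F` from each `y ∈ G`. Clopen upsets are closed under finite intersections, so compactness
of `G` separates `x` from all of `G`; they are closed under finite unions, so compactness of `F`
lets finitely many of these sets cover `F`. -/

section ClopenUpperSet

variable {X : Type*} [TopologicalSpace X] [LE X]

theorem IsCompact.exists_isClopen_isUpperSet_mem_disjoint {x : X} {K : Set X}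
    (hK : IsCompact K)
    (h : ∀ y ∈ K, ∃ U : Set X, IsClopen U ∧ IsUpperSet U ∧ x ∈ U ∧ y ∉ U) :
    ∃ U : Set X, IsClopen U ∧ IsUpperSet U ∧ x ∈ U ∧ Disjoint K U := by
  refine hK.induction_on (p := fun t ↦ ∃ U : Set X, IsClopen U ∧ IsUpperSet U ∧ x ∈ U ∧
      Disjoint t U) ?_ ?_ ?_ ?_
  · exact ⟨Set.univ, isClopen_univ, isUpperSet_univ, trivial, Set.empty_disjoint _⟩
  · rintro s t hst ⟨U, hUc, hUu, hxU, htU⟩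
    exact ⟨U, hUc, hUu, hxU, htU.mono_left hst⟩
  · rintro s t ⟨U, hUc, hUu, hxU, hsU⟩ ⟨V, hVc, hVu, hxV, htV⟩
    exact ⟨U ∩ V, hUc.inter hVc, hUu.inter hVu, ⟨hxU, hxV⟩,
      Disjoint.union_left (hsU.mono_right Set.inter_subset_left)
        (htV.mono_right Set.inter_subset_right)⟩
  · intro y hy
    obtain ⟨U, hUc, hUu, hxU, hyU⟩ := h y hy
    exact ⟨Uᶜ, mem_nhdsWithin_of_mem_nhds (hUc.compl.isOpen.mem_nhds hyU),
      U, hUc, hUu, hxU, disjoint_compl_left⟩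

theorem IsCompact.exists_isClopen_isUpperSet_superset_disjoint {K L : Set X}
    (hK : IsCompact K)
    (h : ∀ x ∈ K, ∃ U : Set X, IsClopen U ∧ IsUpperSet U ∧ x ∈ U ∧ Disjoint L U) :
    ∃ U : Set X, IsClopen U ∧ IsUpperSet U ∧ K ⊆ U ∧ Disjoint L U := by
  refine hK.induction_on (p := fun t ↦ ∃ U : Set X, IsClopen U ∧ IsUpperSet U ∧ t ⊆ U ∧
      Disjoint L U) ?_ ?_ ?_ ?_
  · exact ⟨∅, isClopen_empty, isUpperSet_empty, subset_rfl, Set.disjoint_empty _⟩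
  · rintro s t hst ⟨U, hUc, hUu, htU, hLU⟩
    exact ⟨U, hUc, hUu, hst.trans htU, hLU⟩
  · rintro s t ⟨U, hUc, hUu, hsU, hLU⟩ ⟨V, hVc, hVu, htV, hLV⟩
    exact ⟨U ∪ V, hUc.union hVc, hUu.union hVu, Set.union_subset_union hsU htV,
      Disjoint.union_right hLU hLV⟩
  · intro x hx
    obtain ⟨U, hUc, hUu, hxU, hLU⟩ := h x hx
    exact ⟨U, mem_nhdsWithin_of_mem_nhds (hUc.isOpen.mem_nhds hxU), U, hUc, hUu, subset_rfl, hLU⟩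

end ClopenUpperSet

/-- In a Priestley space (compact ordered space with the Priestley separation axiom),
if `F` and `G` are closed subsets such that `↑F ∩ ↓G = ∅`, then there is a clopen
upset `U` with `F ⊆ U` and `G ∩ U = ∅`. -/
theorem priestley_separation_of_closed
    {X : Type*} [TopologicalSpace X] [PartialOrder X] [CompactSpace X]
    (hpries : ∀ x y : X, ¬ x ≤ y →
      ∃ U : Set X, IsClopen U ∧ IsUpperSet U ∧ x ∈ U ∧ y ∉ U)
    (F G : Set X) (hF : IsClosed F) (hG : IsClosed G)
    (hdisj : {x : X | ∃ s ∈ F, s ≤ x} ∩ {x : X | ∃ s ∈ G, x ≤ s} = ∅) :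
    ∃ U : Set X, IsClopen U ∧ IsUpperSet U ∧ F ⊆ U ∧ G ∩ U = ∅ := by
  have hnle : ∀ x ∈ F, ∀ y ∈ G, ¬ x ≤ y := fun x hx y hy hxy ↦
    (Set.eq_empty_iff_forall_notMem.1 hdisj) x ⟨⟨x, hx, le_rfl⟩, y, hy, hxy⟩
  obtain ⟨U, hUc, hUu, hFU, hGU⟩ :=
    hF.isCompact.exists_isClopen_isUpperSet_superset_disjoint fun x hx ↦
      hG.isCompact.exists_isClopen_isUpperSet_mem_disjoint fun y hy ↦
        hpries x y (hnle x hx y hy)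
  exact ⟨U, hUc, hUu, hFU, Set.disjoint_iff_inter_eq_empty.1 hGU⟩
end

section
/- Esakia's lemma: Let X be an Esakia space and F a down-directed (under inclusion) family of nonempty closed subsets of X. Then ↓(⋂ F) = ⋂ {↓F : F ∈ F}. -/
/-!
If `x` lies below some point of every `F ∈ 𝓕`, then the sets `F ∩ ↑x` form a down-directed
family of nonempty closed subsets of the compact space, so their intersection contains a
point `s`, and `x ≤ s ∈ ⋂ 𝓕`.
-/

open Set

theorem IsCompact.inter_sInter_nonempty_of_directedOn {X : Type*} [TopologicalSpace X]
    {K : Set X} (hK : IsCompact K) {𝓕 : Set (Set X)} (hcl : ∀ F ∈ 𝓕, IsClosed F)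
    (hdir : DirectedOn (· ⊇ ·) 𝓕) (hKne : K.Nonempty) (hmeet : ∀ F ∈ 𝓕, (K ∩ F).Nonempty) :
    (K ∩ ⋂₀ 𝓕).Nonempty := by
  rcases 𝓕.eq_empty_or_nonempty with rfl | h𝓕
  · simpa using hKne
  have : Nonempty 𝓕 := h𝓕.to_subtype
  by_contra hempty
  rw [not_nonempty_iff_eq_empty, sInter_eq_iInter] at hempty
  obtain ⟨⟨F, hF𝓕⟩, hF⟩ :=
    hK.elim_directed_family_closed (fun F : 𝓕 ↦ (F : Set X)) (fun F ↦ hcl F F.2) hempty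
      hdir.directed_val
  exact (hmeet F hF𝓕).ne_empty hF

theorem lowerClosure_sInter_of_directedOn {X : Type*} [TopologicalSpace X] [Preorder X]
    [CompactSpace X] (hup : ∀ x : X, IsClosed (Ici x)) {𝓕 : Set (Set X)}
    (hcl : ∀ F ∈ 𝓕, IsClosed F) (hdir : DirectedOn (· ⊇ ·) 𝓕) :
    lowerClosure (⋂₀ 𝓕) = ⨅ F ∈ 𝓕, lowerClosure F := by
  refine le_antisymm (le_iInf₂ fun F hF ↦ lowerClosure_mono (sInter_subset_of_mem hF)) ?_
  intro x hx
  simp only [SetLike.mem_coe, LowerSet.mem_iInf₂_iff, mem_lowerClosure] at hx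
  obtain ⟨s, hxs, hs⟩ := (hup x).isCompact.inter_sInter_nonempty_of_directedOn hcl hdir
    nonempty_Ici fun F hF ↦ (hx F hF).imp fun _ ⟨hs, hxs⟩ ↦ ⟨hxs, hs⟩
  exact ⟨s, hs, hxs⟩

theorem esakia_lemma_general
    {X : Type*} [TopologicalSpace X] [PartialOrder X] [CompactSpace X]
    (hup : ∀ x : X, IsClosed (Set.Ici x))
    (𝓕 : Set (Set X))
    (hcl : ∀ F ∈ 𝓕, IsClosed F)
    (hdir : ∀ F ∈ 𝓕, ∀ G ∈ 𝓕, ∃ H ∈ 𝓕, H ⊆ F ∧ H ⊆ G) :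
    {x : X | ∃ s ∈ ⋂₀ 𝓕, x ≤ s} = ⋂ F ∈ 𝓕, {x : X | ∃ s ∈ F, x ≤ s} := by
  exact (congrArg SetLike.coe (lowerClosure_sInter_of_directedOn hup hcl hdir)).trans
    (LowerSet.coe_iInf₂ _)

/-- Esakia's lemma: in an Esakia space, for a down-directed family `𝓕` of nonempty
closed subsets, `↓(⋂ 𝓕) = ⋂ {↓F : F ∈ 𝓕}`. -/
theorem esakia_lemma
    {X : Type*} [TopologicalSpace X] [PartialOrder X] [CompactSpace X] [T2Space X]
    (hzd : TopologicalSpace.IsTopologicalBasis {s : Set X | IsClopen s})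
    (hpries : ∀ x y : X, ¬ x ≤ y →
      ∃ U : Set X, IsClopen U ∧ IsUpperSet U ∧ x ∈ U ∧ y ∉ U)
    (hdown : ∀ U : Set X, IsOpen U → IsOpen {x : X | ∃ u ∈ U, x ≤ u})
    (hup : ∀ x : X, IsClosed (Set.Ici x))
    (𝓕 : Set (Set X))
    (hne : ∀ F ∈ 𝓕, F.Nonempty) (hcl : ∀ F ∈ 𝓕, IsClosed F)
    (hdir : ∀ F ∈ 𝓕, ∀ G ∈ 𝓕, ∃ H ∈ 𝓕, H ⊆ F ∧ H ⊆ G) :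
    {x : X | ∃ s ∈ ⋂₀ 𝓕, x ≤ s} = ⋂ F ∈ 𝓕, {x : X | ∃ s ∈ F, x ≤ s} :=
  esakia_lemma_general hup 𝓕 hcl hdir
end

section
/- Let Y be an Esakia space and X a dense subspace of Y that is an upset of Y. Then X with induced order and topology is continuously ordered: ↑x is closed in X for each x ∈ X, and for every open U ⊆ X the set ↓_X U is open in X. -/
/-!
Priestley separation makes every principal upset `↑x` closed in `Y`, and `↑x` computed in `X`
is its trace on `X`. Since `X` is an upset, the downset taken in `X` of a trace `X ∩ V` is the
trace of the downset of `V` taken in `Y`, so openness of downsets passes from `Y` to `X`.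
-/

theorem isClosed_Ici_of_separating_upperSets {Y : Type*} [TopologicalSpace Y] [Preorder Y]
    (hsep : ∀ x y : Y, ¬ x ≤ y → ∃ U : Set Y, IsClosed U ∧ IsUpperSet U ∧ x ∈ U ∧ y ∉ U)
    (x : Y) : IsClosed (Set.Ici x) := by
  refine isOpen_compl_iff.mp <| isOpen_iff_forall_mem_open.mpr fun y hy => ?_
  obtain ⟨U, hU, hUup, hxU, hyU⟩ := hsep x y hy
  exact ⟨Uᶜ, fun z hzU hxz => hzU (hUup hxz hxU), hU.isOpen_compl, hyU⟩

namespace IsUpperSet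

variable {Y : Type*} {X : Set Y}

theorem lowerClosure_preimage_val [Preorder Y] (hX : IsUpperSet X) (V : Set Y) :
    (lowerClosure (Subtype.val ⁻¹' V : Set X) : Set X) =
      Subtype.val ⁻¹' (lowerClosure V : Set Y) := by
  ext x
  constructor
  · rintro ⟨u, hu, hxu⟩
    exact ⟨u, hu, hxu⟩
  · rintro ⟨v, hv, hxv⟩
    exact ⟨⟨v, hX hxv x.2⟩, hv, hxv⟩

theorem isOpen_lowerClosure_subtype [TopologicalSpace Y] [Preorder Y] (hX : IsUpperSet X)
    (hY : ∀ V : Set Y, IsOpen V → IsOpen (lowerClosure V : Set Y)) {U : Set X} (hU : IsOpen U) :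
    IsOpen (lowerClosure U : Set X) := by
  obtain ⟨V, hV, rfl⟩ := hU
  rw [hX.lowerClosure_preimage_val V]
  exact (hY V hV).preimage continuous_subtype_val

end IsUpperSet

theorem dense_upset_of_esakia_continuously_ordered_general
    {Y : Type*} [TopologicalSpace Y] [PartialOrder Y]
    (hpries : ∀ x y : Y, ¬ x ≤ y →
      ∃ U : Set Y, IsClopen U ∧ IsUpperSet U ∧ x ∈ U ∧ y ∉ U)
    (hdownY : ∀ V : Set Y, IsOpen V → IsOpen {y : Y | ∃ v ∈ V, y ≤ v})
    (X : Set Y) (hupset : IsUpperSet X) :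
    (∀ x : X, IsClosed (Set.Ici x)) ∧
    (∀ U : Set X, IsOpen U → IsOpen {x : X | ∃ u ∈ U, x ≤ u}) := by
  have hsep : ∀ x y : Y, ¬ x ≤ y → ∃ U : Set Y, IsClosed U ∧ IsUpperSet U ∧ x ∈ U ∧ y ∉ U :=
    fun x y hxy => (hpries x y hxy).imp fun _ ⟨hU, hrest⟩ => ⟨hU.isClosed, hrest⟩
  refine ⟨fun x => ?_, fun U hU => hupset.isOpen_lowerClosure_subtype hdownY hU⟩
  exact (isClosed_Ici_of_separating_upperSets hsep (x : Y)).preimage continuous_subtype_val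

/-- Let `Y` be an Esakia space and `X` a dense subset of `Y` that is an upset.
Then `X`, with the subspace topology and induced order, is continuously ordered:
`↑x` is closed in `X` for each `x ∈ X`, and `↓_X U` is open in `X` for every open
`U ⊆ X`. -/
theorem dense_upset_of_esakia_continuously_ordered
    {Y : Type*} [TopologicalSpace Y] [PartialOrder Y] [CompactSpace Y] [T2Space Y]
    (hzd : TopologicalSpace.IsTopologicalBasis {s : Set Y | IsClopen s})
    (hpries : ∀ x y : Y, ¬ x ≤ y →
      ∃ U : Set Y, IsClopen U ∧ IsUpperSet U ∧ x ∈ U ∧ y ∉ U)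
    (hdownY : ∀ V : Set Y, IsOpen V → IsOpen {y : Y | ∃ v ∈ V, y ≤ v})
    (X : Set Y) (hdense : Dense X) (hupset : IsUpperSet X) :
    (∀ x : X, IsClosed (Set.Ici x)) ∧
    (∀ U : Set X, IsOpen U → IsOpen {x : X | ∃ u ∈ U, x ≤ u}) :=
  dense_upset_of_esakia_continuously_ordered_general hpries hdownY X hupset
end

section
/- Let Y be an Esakia space and X a dense subspace of Y such that ↑_X x is dense in ↑_Y x for every x ∈ X, and X is image-compact (↑_X x is compact for each x ∈ X). Then X is an upset of Y. -/
/-- Let `Y` be an Esakia space and `X` a dense subset such that `↑_X x` is dense in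
`↑_Y x` for every `x ∈ X` (an Esakia order-compactification situation), and suppose
`X` is image-compact (`↑_X x` is compact for every `x ∈ X`). Then `X` is an upset
of `Y`. -/
theorem imageCompact_esakia_compactification_upset
    {Y : Type*} [TopologicalSpace Y] [PartialOrder Y] [CompactSpace Y] [T2Space Y]
    (hzd : TopologicalSpace.IsTopologicalBasis {s : Set Y | IsClopen s})
    (hpries : ∀ x y : Y, ¬ x ≤ y →
      ∃ U : Set Y, IsClopen U ∧ IsUpperSet U ∧ x ∈ U ∧ y ∉ U)
    (hdown : ∀ V : Set Y, IsOpen V → IsOpen {y : Y | ∃ v ∈ V, y ≤ v})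
    (X : Set Y) (hdense : Dense X)
    (hupdense : ∀ x ∈ X, Set.Ici x ⊆ closure (Set.Ici x ∩ X))
    (hic : ∀ x ∈ X, IsCompact (Set.Ici x ∩ X)) :
    IsUpperSet X := by
  intro a b hab ha
  have h := hupdense a ha hab
  rw [((hic a ha).isClosed).closure_eq] at h
  exact h.2
end

section
/- Let Y be an Esakia space and X a dense subspace with induced order such that ↑_X x is dense in ↑_Y x for every x ∈ X (i.e., Y is an Esakia order-compactification of X). Then for any open subsets W ⊆ Y, setting U = W ∩ X, one has ↓_X U = (↓_Y W) ∩ X; consequently X is continuously ordered (↓ of opens are open and ↑x is closed in X). -/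
/-! If `↑x ∩ X` is dense in `↑x` and `x ≤ w` with `w` in an open `W`, then `W` meets
`↑x ∩ X`, so the witness for `x ∈ ↓W` can be moved into `X`. Hence `↓_X (W ∩ X)` is the
trace on `X` of `↓_Y W`, which is open when `W` is; and `↑_X x` is the trace of the closed
set `↑_Y x`. -/

open Set

section

variable {Y : Type*} [TopologicalSpace Y] [Preorder Y] {X : Set Y}

theorem mem_lowerClosure_inter_of_subset_closure
    (hX : ∀ x ∈ X, Ici x ⊆ closure (Ici x ∩ X)) {W : Set Y} (hW : IsOpen W)
    {x : Y} (hx : x ∈ X) (hxW : x ∈ lowerClosure W) : x ∈ lowerClosure (W ∩ X) := by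
  obtain ⟨w, hwW, hxw⟩ := hxW
  obtain ⟨u, huW, hxu, huX⟩ := mem_closure_iff.mp (hX x hx hxw) W hW hwW
  exact ⟨u, ⟨huW, huX⟩, hxu⟩

theorem inter_lowerClosure_inter_eq_of_subset_closure
    (hX : ∀ x ∈ X, Ici x ⊆ closure (Ici x ∩ X)) {W : Set Y} (hW : IsOpen W) :
    X ∩ lowerClosure (W ∩ X) = (lowerClosure W : Set Y) ∩ X :=
  Subset.antisymm
    (fun _ ⟨hx, hxW⟩ => ⟨lowerClosure_mono inter_subset_left hxW, hx⟩)
    fun _ ⟨hxW, hx⟩ => ⟨hx, mem_lowerClosure_inter_of_subset_closure hX hW hx hxW⟩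

theorem preimage_val_lowerClosure_of_subset_closure
    (hX : ∀ x ∈ X, Ici x ⊆ closure (Ici x ∩ X)) {W : Set Y} (hW : IsOpen W) :
    ((↑) : X → Y) ⁻¹' lowerClosure W = lowerClosure (((↑) : X → Y) ⁻¹' W) := by
  ext x
  constructor
  · intro hxW
    obtain ⟨u, ⟨huW, huX⟩, hxu⟩ :=
      mem_lowerClosure_inter_of_subset_closure hX hW x.2 hxW
    exact ⟨⟨u, huX⟩, huW, hxu⟩
  · rintro ⟨u, huW, hxu⟩
    exact ⟨u, huW, hxu⟩

end

theorem esakia_compactification_downset_eq_general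
    {Y : Type*} [TopologicalSpace Y] [PartialOrder Y]
    (hdown : ∀ V : Set Y, IsOpen V → IsOpen {y : Y | ∃ v ∈ V, y ≤ v})
    (hup : ∀ y : Y, IsClosed (Set.Ici y))
    (X : Set Y)
    (hupdense : ∀ x ∈ X, Set.Ici x ⊆ closure (Set.Ici x ∩ X)) :
    (∀ W : Set Y, IsOpen W →
      {x : Y | x ∈ X ∧ ∃ u ∈ W ∩ X, x ≤ u} = {y : Y | ∃ w ∈ W, y ≤ w} ∩ X) ∧
    (∀ U : Set X, IsOpen U → IsOpen {x : X | ∃ u ∈ U, x ≤ u}) ∧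
    (∀ x : X, IsClosed (Set.Ici x)) := by
  refine ⟨fun W hW => ?_, fun U hU => ?_, fun x => (hup x).preimage continuous_subtype_val⟩
  · exact inter_lowerClosure_inter_eq_of_subset_closure hupdense hW
  · obtain ⟨W, hW, rfl⟩ := isOpen_induced_iff.mp hU
    have hopen : IsOpen (((↑) : X → Y) ⁻¹' lowerClosure W) :=
      (hdown W hW).preimage continuous_subtype_val
    rwa [preimage_val_lowerClosure_of_subset_closure hupdense hW] at hopen

/-- Let `Y` be an Esakia space and `X` a dense subset such that `↑_X x` is dense in
`↑_Y x` for every `x ∈ X`. Then for every open `W ⊆ Y`, with `U = W ∩ X`, one has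
`↓_X U = (↓_Y W) ∩ X`; consequently `X` is continuously ordered: `↓_X` of an open
subset of `X` is open in `X`, and `↑x` is closed in `X` for every `x`. -/
theorem esakia_compactification_downset_eq
    {Y : Type*} [TopologicalSpace Y] [PartialOrder Y] [CompactSpace Y] [T2Space Y]
    (hzd : TopologicalSpace.IsTopologicalBasis {s : Set Y | IsClopen s})
    (hpries : ∀ x y : Y, ¬ x ≤ y →
      ∃ U : Set Y, IsClopen U ∧ IsUpperSet U ∧ x ∈ U ∧ y ∉ U)
    (hdown : ∀ V : Set Y, IsOpen V → IsOpen {y : Y | ∃ v ∈ V, y ≤ v})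
    (hup : ∀ y : Y, IsClosed (Set.Ici y))
    (X : Set Y) (hdense : Dense X)
    (hupdense : ∀ x ∈ X, Set.Ici x ⊆ closure (Set.Ici x ∩ X)) :
    (∀ W : Set Y, IsOpen W →
      {x : Y | x ∈ X ∧ ∃ u ∈ W ∩ X, x ≤ u} = {y : Y | ∃ w ∈ W, y ≤ w} ∩ X) ∧
    (∀ U : Set X, IsOpen U → IsOpen {x : X | ∃ u ∈ U, x ≤ u}) ∧
    (∀ x : X, IsClosed (Set.Ici x)) :=
  esakia_compactification_downset_eq_general hdown hup X hupdense
end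

section
/- Let Y be an Esakia space and X a dense subspace with induced order such that ↑_X x is dense in ↑_Y x for every x ∈ X. Then Y is an N-order-compactification of X: the order ≤_Y is the closure in Y × Y of the order ≤_X (viewed as a subset of Y × Y). -/
/-!
The order of `Y` is closed by Priestley separation: if `x ≰ y`, a clopen upper set `U` with
`x ∈ U ∌ y` gives the neighbourhood `U ×ˢ Uᶜ` of `(x, y)` missing the order. Conversely, given
`x ≤ y` and basic neighbourhoods `U ∋ x`, `V ∋ y`, the set `U ∩ ↓V` is open and contains `x`, so
it meets `X` in some `a ≤ v ∈ V`; since `↑_X a` is dense in `↑_Y a`, `V` contains some `b ∈ X`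
with `a ≤ b`, and `(a, b) ∈ U ×ˢ V` is a point of the order of `X`.
-/

open Set

section

variable {Y : Type*} [TopologicalSpace Y] [Preorder Y]

theorem OrderClosedTopology.of_exists_isClopen_isUpperSet
    (hpries : ∀ x y : Y, ¬ x ≤ y → ∃ U : Set Y, IsClopen U ∧ IsUpperSet U ∧ x ∈ U ∧ y ∉ U) :
    OrderClosedTopology Y where
  isClosed_le' := by
    rw [← isOpen_compl_iff, isOpen_prod_iff]
    intro x y hxy
    obtain ⟨U, hU, hUup, hxU, hyU⟩ := hpries x y hxy
    exact ⟨U, Uᶜ, hU.isOpen, hU.isClosed.isOpen_compl, hxU, hyU,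
      fun p hp hle => hp.2 (hUup hle hp.1)⟩

theorem exists_mem_le_mem_of_dense_of_isOpen_lowerClosure
    (hdown : ∀ V : Set Y, IsOpen V → IsOpen {y : Y | ∃ v ∈ V, y ≤ v})
    {X : Set Y} (hdense : Dense X) (hupdense : ∀ x ∈ X, Ici x ⊆ closure (Ici x ∩ X))
    {x y : Y} (hxy : x ≤ y) {U V : Set Y} (hU : IsOpen U) (hV : IsOpen V)
    (hxU : x ∈ U) (hyV : y ∈ V) :
    ∃ a ∈ U ∩ X, ∃ b ∈ V ∩ X, a ≤ b := by
  obtain ⟨a, ⟨haU, v, hvV, hav⟩, haX⟩ :=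
    hdense.inter_open_nonempty _ (hU.inter (hdown V hV)) ⟨x, hxU, y, hyV, hxy⟩
  obtain ⟨b, hbV, hab, hbX⟩ := mem_closure_iff.mp (hupdense a haX hav) V hV hvV
  exact ⟨a, ⟨haU, haX⟩, b, ⟨hbV, hbX⟩, hab⟩

theorem setOf_le_subset_closure_of_dense_of_isOpen_lowerClosure
    (hdown : ∀ V : Set Y, IsOpen V → IsOpen {y : Y | ∃ v ∈ V, y ≤ v})
    {X : Set Y} (hdense : Dense X) (hupdense : ∀ x ∈ X, Ici x ⊆ closure (Ici x ∩ X)) :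
    {p : Y × Y | p.1 ≤ p.2} ⊆ closure {p : Y × Y | p.1 ∈ X ∧ p.2 ∈ X ∧ p.1 ≤ p.2} := by
  rintro ⟨x, y⟩ (hxy : x ≤ y)
  rw [mem_closure_iff]
  intro O hO hxyO
  obtain ⟨U, V, hU, hV, hxU, hyV, hUV⟩ := isOpen_prod_iff.mp hO x y hxyO
  obtain ⟨a, ⟨haU, haX⟩, b, ⟨hbV, hbX⟩, hab⟩ :=
    exists_mem_le_mem_of_dense_of_isOpen_lowerClosure hdown hdense hupdense hxy hU hV hxU hyV
  exact ⟨(a, b), hUV ⟨haU, hbV⟩, haX, hbX, hab⟩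

end

theorem esakia_compactification_is_N_order_compactification_general
    {Y : Type*} [TopologicalSpace Y] [PartialOrder Y]
    (hpries : ∀ x y : Y, ¬ x ≤ y →
      ∃ U : Set Y, IsClopen U ∧ IsUpperSet U ∧ x ∈ U ∧ y ∉ U)
    (hdown : ∀ V : Set Y, IsOpen V → IsOpen {y : Y | ∃ v ∈ V, y ≤ v})
    (X : Set Y) (hdense : Dense X)
    (hupdense : ∀ x ∈ X, Set.Ici x ⊆ closure (Set.Ici x ∩ X)) :
    {p : Y × Y | p.1 ≤ p.2} =
      closure {p : Y × Y | p.1 ∈ X ∧ p.2 ∈ X ∧ p.1 ≤ p.2} := by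
  have := OrderClosedTopology.of_exists_isClopen_isUpperSet hpries
  exact (setOf_le_subset_closure_of_dense_of_isOpen_lowerClosure hdown hdense hupdense).antisymm
    (closure_minimal (fun p hp => hp.2.2) isClosed_le_prod)

/-- Let `Y` be an Esakia space and `X` a dense subset such that `↑_X x` is dense in
`↑_Y x` for every `x ∈ X`. Then `Y` is an N-order-compactification of `X`: the
order of `Y` is the closure in `Y × Y` of the restricted order of `X`. -/
theorem esakia_compactification_is_N_order_compactification
    {Y : Type*} [TopologicalSpace Y] [PartialOrder Y] [CompactSpace Y] [T2Space Y]
    (hzd : TopologicalSpace.IsTopologicalBasis {s : Set Y | IsClopen s})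
    (hpries : ∀ x y : Y, ¬ x ≤ y →
      ∃ U : Set Y, IsClopen U ∧ IsUpperSet U ∧ x ∈ U ∧ y ∉ U)
    (hdown : ∀ V : Set Y, IsOpen V → IsOpen {y : Y | ∃ v ∈ V, y ≤ v})
    (X : Set Y) (hdense : Dense X)
    (hupdense : ∀ x ∈ X, Set.Ici x ⊆ closure (Set.Ici x ∩ X)) :
    {p : Y × Y | p.1 ≤ p.2} =
      closure {p : Y × Y | p.1 ∈ X ∧ p.2 ∈ X ∧ p.1 ≤ p.2} :=
  esakia_compactification_is_N_order_compactification_general hpries hdown X hdense hupdense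
end

section
/- Let Y be an Esakia space and X a dense subspace such that ↑_X x is dense in ↑_Y x for every x ∈ X. Then the map sending a clopen upset U of Y to U ∩ X is a Heyting algebra embedding of ClopUp(Y) into the Heyting algebra Up(X) of all upsets of X; in particular, for clopen upsets U, V of Y: (U →_{ClopUp(Y)} V) ∩ X = (U ∩ X) →_{Up(X)} (V ∩ X), where E → F in Up(X) is {x ∈ X : ↑_X x ∩ E ⊆ F}. -/
/-!
A clopen set is the closure of its trace on a dense set, so clopen upsets are determined by
their traces on `X`. For the implication, `x ∈ X` lies in `↓(U \ V)` iff some `w ≥ x` lies in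
the open set `U \ V`; since `↑_X x` is dense in `↑_Y x`, such a `w` can be taken in `X`, which
is exactly the failure of `↑_X x ∩ U ⊆ V`.
-/

open Set

theorem Dense.subset_of_inter_subset {Y : Type*} [TopologicalSpace Y] {X s t : Set Y}
    (hX : Dense X) (hs : IsOpen s) (ht : IsClosed t) (h : s ∩ X ⊆ t) : s ⊆ t :=
  calc s ⊆ closure (s ∩ X) := hX.open_subset_closure_inter hs
    _ ⊆ closure t := closure_mono h
    _ = t := ht.closure_eq

theorem IsClopen.eq_of_inter_dense_eq {Y : Type*} [TopologicalSpace Y] {X U V : Set Y}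
    (hX : Dense X) (hU : IsClopen U) (hV : IsClopen V) (h : U ∩ X = V ∩ X) : U = V :=
  (hX.subset_of_inter_subset hU.isOpen hV.isClosed (h ▸ inter_subset_left)).antisymm
    (hX.subset_of_inter_subset hV.isOpen hU.isClosed (h ▸ inter_subset_left))

theorem exists_mem_inter_Ici_of_mem_open {Y : Type*} [TopologicalSpace Y] [Preorder Y]
    {X W : Set Y} {x w : Y} (hx : Ici x ⊆ closure (Ici x ∩ X)) (hW : IsOpen W)
    (hxw : x ≤ w) (hw : w ∈ W) : ∃ y ∈ X, x ≤ y ∧ y ∈ W := by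
  obtain ⟨y, hyW, hxy, hyX⟩ := mem_closure_iff.mp (hx hxw) W hW hw
  exact ⟨y, hyX, hxy, hyW⟩

theorem compl_lowerClosure_sdiff_inter_eq {Y : Type*} [TopologicalSpace Y] [Preorder Y]
    {X U V : Set Y} (hupdense : ∀ x ∈ X, Ici x ⊆ closure (Ici x ∩ X))
    (hU : IsOpen U) (hV : IsClosed V) :
    {y : Y | ∃ w ∈ U \ V, y ≤ w}ᶜ ∩ X =
      {x : Y | x ∈ X ∧ ∀ y ∈ X, x ≤ y → y ∈ U ∩ X → y ∈ V ∩ X} := by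
  ext x
  simp only [mem_inter_iff, mem_compl_iff, mem_ofPred_eq]
  constructor
  · rintro ⟨hx, hxX⟩
    refine ⟨hxX, fun y hyX hxy ⟨hyU, _⟩ => ⟨?_, hyX⟩⟩
    by_contra hyV
    exact hx ⟨y, ⟨hyU, hyV⟩, hxy⟩
  · rintro ⟨hxX, hx⟩
    refine ⟨?_, hxX⟩
    rintro ⟨w, hw, hxw⟩
    obtain ⟨y, hyX, hxy, hyU, hyV⟩ :=
      exists_mem_inter_Ici_of_mem_open (hupdense x hxX) (hU.sdiff hV) hxw hw
    exact hyV (hx y hyX hxy ⟨hyU, hyX⟩).1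

theorem esakia_compactification_heyting_embedding_general
    {Y : Type*} [TopologicalSpace Y] [PartialOrder Y]
    (X : Set Y) (hdense : Dense X)
    (hupdense : ∀ x ∈ X, Set.Ici x ⊆ closure (Set.Ici x ∩ X)) :
    (∀ U V : Set Y, IsClopen U → IsUpperSet U → IsClopen V → IsUpperSet V →
      U ∩ X = V ∩ X → U = V) ∧
    (∀ U V : Set Y, IsClopen U → IsUpperSet U → IsClopen V → IsUpperSet V →
      {y : Y | ∃ w ∈ U \ V, y ≤ w}ᶜ ∩ X =
        {x : Y | x ∈ X ∧ ∀ y ∈ X, x ≤ y → y ∈ U ∩ X → y ∈ V ∩ X}) :=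
  ⟨fun _ _ hU _ hV _ h => hU.eq_of_inter_dense_eq hdense hV h,
    fun _ _ hU _ hV _ => compl_lowerClosure_sdiff_inter_eq hupdense hU.isOpen hV.isClosed⟩

/-- Let `Y` be an Esakia space and `X` a dense subset such that `↑_X x` is dense in
`↑_Y x` for every `x ∈ X`. Then `U ↦ U ∩ X` is a Heyting algebra embedding of
`ClopUp(Y)` into `Up(X)`: it is injective on clopen upsets and, for clopen upsets
`U, V` of `Y`, `(U → V) ∩ X = (U ∩ X) → (V ∩ X)`, where the implication in `Y` is
`Y \ ↓(U \ V)` and the implication in `Up(X)` is `{x ∈ X : ↑_X x ∩ E ⊆ F}`. -/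
theorem esakia_compactification_heyting_embedding
    {Y : Type*} [TopologicalSpace Y] [PartialOrder Y] [CompactSpace Y] [T2Space Y]
    (hzd : TopologicalSpace.IsTopologicalBasis {s : Set Y | IsClopen s})
    (hpries : ∀ x y : Y, ¬ x ≤ y →
      ∃ U : Set Y, IsClopen U ∧ IsUpperSet U ∧ x ∈ U ∧ y ∉ U)
    (hdown : ∀ W : Set Y, IsOpen W → IsOpen {y : Y | ∃ w ∈ W, y ≤ w})
    (X : Set Y) (hdense : Dense X)
    (hupdense : ∀ x ∈ X, Set.Ici x ⊆ closure (Set.Ici x ∩ X)) :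
    (∀ U V : Set Y, IsClopen U → IsUpperSet U → IsClopen V → IsUpperSet V →
      U ∩ X = V ∩ X → U = V) ∧
    (∀ U V : Set Y, IsClopen U → IsUpperSet U → IsClopen V → IsUpperSet V →
      {y : Y | ∃ w ∈ U \ V, y ≤ w}ᶜ ∩ X =
        {x : Y | x ∈ X ∧ ∀ y ∈ X, x ≤ y → y ∈ U ∩ X → y ∈ V ∩ X}) :=
  esakia_compactification_heyting_embedding_general X hdense hupdense
end
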